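/- arXiv:math/9803157 — 6 statements merged into one kernel-verified Lean document; each statement's English description precedes it below -/
import Mathlib

section
/- Let m be an integer with |m| ≥ 3 and let L = [[m, -1], [1, 0]] in SL(2,ℤ). If K ∈ SL(2,ℤ) commutes with L, then K = L^n or K = -L^n for some integer n. -/
open Matrix

open scoped MatrixGroups

/-! The matrices commuting with `L` are those of the form `a • 1 + b • L`, and the determinant of
such a matrix is the binary quadratic form `a ^ 2 + m a b + b ^ 2`. Multiplying by `L` or `L⁻¹`
sends `(a, b)` to `(-b, a + m b)` or to `(b + m a, -a)`. If the form equals `1` and `a b ≠ 0`,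
one of these two moves strictly decreases `|a| + |b|`, so after finitely many steps we reach
`b = 0` or `a = 0`, i.e. `± 1` or `± L`. -/

section SignedZPow

variable {n R : Type*} [Fintype n] [DecidableEq n] [CommRing R]

def IsSignedZPow (L : SpecialLinearGroup n R) (M : Matrix n n R) : Prop :=
  ∃ k : ℤ, M = ((L ^ k : SpecialLinearGroup n R) : Matrix n n R)
    ∨ M = -((L ^ k : SpecialLinearGroup n R) : Matrix n n R)

theorem IsSignedZPow.of_mul_zpow {L : SpecialLinearGroup n R} {M : Matrix n n R} (j : ℤ)
    (h : IsSignedZPow L (M * ((L ^ j : SpecialLinearGroup n R) : Matrix n n R))) :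
    IsSignedZPow L M := by
  have hM : M = M * ((L ^ j : SpecialLinearGroup n R) : Matrix n n R)
      * ((L ^ (-j) : SpecialLinearGroup n R) : Matrix n n R) := by
    rw [Matrix.mul_assoc, ← Matrix.SpecialLinearGroup.coe_mul, ← _root_.zpow_add, add_neg_cancel,
      zpow_zero, Matrix.SpecialLinearGroup.coe_one, Matrix.mul_one]
  obtain ⟨k, hk | hk⟩ := h
  all_goals
    refine ⟨k - j, ?_⟩
    rw [hM, hk, sub_eq_add_neg, _root_.zpow_add, Matrix.SpecialLinearGroup.coe_mul]
  · exact .inl rfl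
  · exact .inr (Matrix.neg_mul _ _)

end SignedZPow

theorem abs_add_mul_lt_of_sq_add_mul_add_sq_eq_one {m a b : ℤ}
    (h : a ^ 2 + m * a * b + b ^ 2 = 1) (hb : b ≠ 0) (hba : |b| ≤ |a|) :
    |a + m * b| < |a| := by
  have ha : 0 < |a| := (abs_pos.2 hb).trans_le hba
  have hprod : |a| * |a + m * b| = b ^ 2 - 1 := by
    rw [← abs_mul, show a * (a + m * b) = -(b ^ 2 - 1) by linear_combination h, abs_neg,
      abs_of_nonneg (by nlinarith [Int.one_le_abs hb, sq_abs b])]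
  refine lt_of_mul_lt_mul_left ?_ ha.le
  nlinarith [sq_abs a, sq_abs b, abs_nonneg b]

section Companion

local notation "M₂" => Matrix (Fin 2) (Fin 2) ℤ

variable {m : ℤ} {L : SL(2, ℤ)} (hL : (L : M₂) = !![m, -1; 1, 0])
include hL

theorem mul_self_eq_of_companion : (L : M₂) * L = m • (L : M₂) - 1 := by
  rw [hL]
  ext i j
  fin_cases i <;> fin_cases j <;> simp [sub_eq_add_neg]

theorem coe_inv_eq_of_companion : ((L⁻¹ : SL(2, ℤ)) : M₂) = m • (1 : M₂) - (L : M₂) := by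
  rw [Matrix.SpecialLinearGroup.coe_inv, hL, adjugate_fin_two, one_fin_two]
  ext i j
  fin_cases i <;> fin_cases j <;> simp

theorem pencil_mul (a b : ℤ) :
    (a • (1 : M₂) + b • (L : M₂)) * L = (-b) • (1 : M₂) + (a + m * b) • (L : M₂) := by
  rw [add_mul, smul_mul, smul_mul, Matrix.one_mul, mul_self_eq_of_companion hL]
  module

theorem pencil_mul_inv (a b : ℤ) :
    (a • (1 : M₂) + b • (L : M₂)) * ((L⁻¹ : SL(2, ℤ)) : M₂)
      = (b + m * a) • (1 : M₂) + (-a) • (L : M₂) := by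
  rw [coe_inv_eq_of_companion hL, mul_sub, Matrix.mul_smul, Matrix.mul_one, pencil_mul hL]
  module

theorem det_pencil (a b : ℤ) :
    (a • (1 : M₂) + b • (L : M₂)).det = a ^ 2 + m * a * b + b ^ 2 := by
  rw [hL, one_fin_two, det_fin_two]
  simp
  ring

theorem eq_pencil_of_commute (K : M₂) (hK : K * L = L * K) :
    K = K 1 1 • (1 : M₂) + K 1 0 • (L : M₂) := by
  rw [hL] at hK
  have hKij := congrFun₂ hK
  simp [mul_apply, Fin.sum_univ_two] at hKij
  rw [hL, one_fin_two]
  ext i j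
  fin_cases i <;> fin_cases j <;> simp <;> linarith

theorem isSignedZPow_pencil (a b : ℤ) (h : a ^ 2 + m * a * b + b ^ 2 = 1) :
    IsSignedZPow L (a • (1 : M₂) + b • (L : M₂)) := by
  rcases eq_or_ne b 0 with rfl | hb
  · obtain rfl | rfl : a = 1 ∨ a = -1 := sq_eq_one_iff.1 (by linear_combination h)
    exacts [⟨0, .inl (by simp)⟩, ⟨0, .inr (by simp)⟩]
  rcases eq_or_ne a 0 with rfl | ha
  · obtain rfl | rfl : b = 1 ∨ b = -1 := sq_eq_one_iff.1 (by linear_combination h)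
    exacts [⟨1, .inl (by simp)⟩, ⟨1, .inr (by simp)⟩]
  rcases le_total |b| |a| with hba | hab
  · have hlt := abs_add_mul_lt_of_sq_add_mul_add_sq_eq_one h hb hba
    refine IsSignedZPow.of_mul_zpow 1 ?_
    rw [zpow_one, pencil_mul hL]
    exact isSignedZPow_pencil (-b) (a + m * b) (by linear_combination h)
  · have hlt := abs_add_mul_lt_of_sq_add_mul_add_sq_eq_one (m := m) (a := b)
      (by linear_combination h) ha hab
    refine IsSignedZPow.of_mul_zpow (-1) ?_
    rw [_root_.zpow_neg_one, pencil_mul_inv hL]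
    exact isSignedZPow_pencil (b + m * a) (-a) (by linear_combination h)
termination_by a.natAbs + b.natAbs
decreasing_by
  all_goals
    rw [Int.abs_eq_natAbs, Int.abs_eq_natAbs] at hlt
    simp only [Int.natAbs_neg]
    omega

end Companion

theorem stmt_0_general (m : ℤ)
    (L K : Matrix.SpecialLinearGroup (Fin 2) ℤ)
    (hL : (L : Matrix (Fin 2) (Fin 2) ℤ) = !![m, -1; 1, 0])
    (hcomm : K * L = L * K) :
    ∃ n : ℤ, (K : Matrix (Fin 2) (Fin 2) ℤ) = ((L ^ n : Matrix.SpecialLinearGroup (Fin 2) ℤ) : Matrix (Fin 2) (Fin 2) ℤ)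
      ∨ (K : Matrix (Fin 2) (Fin 2) ℤ) = -((L ^ n : Matrix.SpecialLinearGroup (Fin 2) ℤ) : Matrix (Fin 2) (Fin 2) ℤ) := by
  have hK := eq_pencil_of_commute hL K (congrArg Subtype.val hcomm)
  have hdet := K.det_coe
  rw [hK, det_pencil hL] at hdet
  rw [hK]
  exact isSignedZPow_pencil hL _ _ hdet

theorem stmt_0 (m : ℤ) (hm : 3 ≤ |m|)
    (L K : Matrix.SpecialLinearGroup (Fin 2) ℤ)
    (hL : (L : Matrix (Fin 2) (Fin 2) ℤ) = !![m, -1; 1, 0])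
    (hcomm : K * L = L * K) :
    ∃ n : ℤ, (K : Matrix (Fin 2) (Fin 2) ℤ) = ((L ^ n : Matrix.SpecialLinearGroup (Fin 2) ℤ) : Matrix (Fin 2) (Fin 2) ℤ)
      ∨ (K : Matrix (Fin 2) (Fin 2) ℤ) = -((L ^ n : Matrix.SpecialLinearGroup (Fin 2) ℤ) : Matrix (Fin 2) (Fin 2) ℤ) :=
  stmt_0_general m L K hL hcomm
end

section
/- Let m be an integer with |m| ≥ 3 and let L = [[m, -1], [1, 0]] in SL(2,ℤ). If K ∈ SL(2,ℤ) satisfies K * L * K⁻¹ = L⁻¹, then m = 3 or m = -3. -/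
open Matrix

lemma step_aux (m a c : ℤ) (hm : 4 ≤ m) (ha : 0 < a) (hc : 0 < c) (hca : c ≤ a)
    (heq : a^2 + c^2 + 1 = m * a * c) :
    ∃ a', 0 < a' ∧ a' < a ∧ a'^2 + c^2 + 1 = m * a' * c := by
  have hne : c ≠ a := by
    rintro rfl
    nlinarith [sq_nonneg c]
  have hca' : c < a := lt_of_le_of_ne hca hne
  have h1 : a * (m * c - a) = c^2 + 1 := by linear_combination -heq
  refine ⟨m * c - a, ?_, ?_, by linear_combination heq⟩
  · nlinarith [h1]
  · nlinarith [h1]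

lemma descent (m : ℤ) (hm : 4 ≤ m) :
    ∀ n : ℕ, ∀ a c : ℤ, 0 < a → 0 < c → a + c ≤ n → a^2 + c^2 + 1 = m * a * c → False := by
  intro n
  induction n with
  | zero => intro a c ha hc h _; omega
  | succ n ih =>
    intro a c ha hc hn heq
    rcases le_or_gt c a with hca | hca
    · obtain ⟨a', ha', haa, heq'⟩ := step_aux m a c hm ha hc hca heq
      exact ih a' c ha' hc (by push_cast at hn ⊢; omega) heq'
    · obtain ⟨c', hc', hcc, heq'⟩ := step_aux m c a hm hc ha hca.le (by linear_combination heq)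
      exact ih a c' ha hc' (by push_cast at hn ⊢; omega) (by linear_combination heq')

lemma nosol (m : ℤ) (hm : 4 ≤ m) (a c : ℤ) (heq : a^2 + c^2 + 1 = m * a * c) : False := by
  have hac : 0 < a * c := by nlinarith [sq_nonneg a, sq_nonneg c, sq_nonneg (a*c)]
  rcases lt_trichotomy a 0 with ha | ha | ha
  · have hc : c < 0 := by nlinarith
    exact descent m hm (-a + -c).toNat (-a) (-c) (by omega) (by omega)
      (by exact_mod_cast Int.self_le_toNat _) (by linear_combination heq)
  · simp [ha] at hac
  · have hc : 0 < c := by nlinarith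
    exact descent m hm (a + c).toNat a c ha hc
      (by exact_mod_cast Int.self_le_toNat _) heq

theorem stmt_1 (m : ℤ) (hm : 3 ≤ |m|)
    (L K : Matrix.SpecialLinearGroup (Fin 2) ℤ)
    (hL : (L : Matrix (Fin 2) (Fin 2) ℤ) = !![m, -1; 1, 0])
    (hconj : K * L * K⁻¹ = L⁻¹) :
    m = 3 ∨ m = -3 := by
  have hKL : K * L = L⁻¹ * K := by
    have := congrArg (· * K) hconj
    simpa [mul_assoc] using this
  have hM : (K : Matrix (Fin 2) (Fin 2) ℤ) * (L : Matrix (Fin 2) (Fin 2) ℤ)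
      = !![0, 1; -1, m] * (K : Matrix (Fin 2) (Fin 2) ℤ) := by
    have h := congrArg (fun A : Matrix.SpecialLinearGroup (Fin 2) ℤ =>
      (A : Matrix (Fin 2) (Fin 2) ℤ)) hKL
    simpa [Matrix.SpecialLinearGroup.coe_inv, hL, Matrix.adjugate_fin_two] using h
  set a := (K : Matrix (Fin 2) (Fin 2) ℤ) 0 0 with ha
  set b := (K : Matrix (Fin 2) (Fin 2) ℤ) 0 1 with hb
  set c := (K : Matrix (Fin 2) (Fin 2) ℤ) 1 0 with hc
  set d := (K : Matrix (Fin 2) (Fin 2) ℤ) 1 1 with hd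
  have hdet : a * d - b * c = 1 := by
    have := K.2
    rw [Matrix.det_fin_two] at this
    linarith [this]
  have e00 := congrFun (congrFun hM 0) 0
  have e01 := congrFun (congrFun hM 0) 1
  have e11 := congrFun (congrFun hM 1) 1
  simp [hL, Matrix.mul_apply, Fin.sum_univ_two, ← ha, ← hb, ← hc, ← hd] at e00 e01 e11
  -- e00 : a * m + b = c ; e01 : -a = d ; e11 : -c = -b + d * m  (roughly)
  have hd2 : d = -a := e01.symm
  have hb2 : b = c - m * a := by linear_combination e11 - m * e01
  have heq : a^2 + c^2 + 1 = m * a * c := by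
    linear_combination -hdet + a * hd2 - c * hb2
  rcases le_or_gt 0 m with hm0 | hm0
  · left
    by_contra h
    have hm4 : 4 ≤ m := by
      rw [abs_of_nonneg hm0] at hm
      omega
    exact nosol m hm4 a c heq
  · right
    by_contra h
    have hm4 : 4 ≤ -m := by
      rw [abs_of_neg hm0] at hm
      omega
    exact nosol (-m) hm4 a (-c) (by linear_combination heq)
end

section
/- Let L = [[m, -1], [1, 0]] with m : ℤ, |m| ≥ 3, and let K ∈ GL(2,ℤ) with det(K) = -1 commute with L. Then m = 3 or m = -3. -/
open Matrix

lemma markov_aux : ∀ n k a b : ℕ, a + b ≤ n → 0 < a → 0 < b → a ≤ b →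
    a*a + b*b + 1 = k*a*b → k = 3 := by
  intro n
  induction n using Nat.strong_induction_on with
  | _ n ih =>
    intro k a b hab ha hb hle heq
    rcases eq_or_lt_of_le hle with heqab | hlt
    · -- a = b
      subst heqab
      have h2 : 2*a < k*a := by nlinarith
      have hc : (k*a - 2*a) + 2*a = k*a := by omega
      have h3 : a*(k*a - 2*a) = 1 := by nlinarith [Nat.mul_le_mul_left a (le_of_eq hc)]
      have ha1 : a = 1 := by
        have := Nat.eq_one_of_mul_eq_one_right h3
        nlinarith [Nat.le_of_dvd one_pos ⟨_, h3.symm⟩]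
      subst ha1
      omega
    · -- a < b, jump
      have hkab : b < k * a := by nlinarith
      set b' := k * a - b with hb'def
      have hsum : b + b' = k * a := by omega
      have h1 : b*b + b*b' = b*(k*a) := by rw [← Nat.mul_add, hsum]
      have hbb' : b * b' = a * a + 1 := by nlinarith
      have hb'pos : 0 < b' := by
        rcases Nat.eq_zero_or_pos b' with h | h
        · rw [h, Nat.mul_zero] at hbb'; omega
        · exact h
      have hb'le : b' ≤ a := by nlinarith
      have heq' : b'*b' + a*a + 1 = k*b'*a := by nlinarith
      exact ih (a + b') (by omega) k b' a (by omega) hb'pos ha hb'le heq'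

lemma markov (k a b : ℕ) (ha : 0 < a) (hb : 0 < b)
    (heq : a*a + b*b + 1 = k*a*b) : k = 3 := by
  rcases le_total a b with h | h
  · exact markov_aux (a+b) k a b le_rfl ha hb h heq
  · exact markov_aux (a+b) k b a (by omega) hb ha h (by nlinarith)

theorem stmt_4 (m : ℤ) (hm : 3 ≤ |m|)
    (K : Matrix.GeneralLinearGroup (Fin 2) ℤ)
    (hdet : ((K : Matrix (Fin 2) (Fin 2) ℤ)).det = -1)
    (hcomm : (K : Matrix (Fin 2) (Fin 2) ℤ) * !![m, -1; 1, 0]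
      = !![m, -1; 1, 0] * (K : Matrix (Fin 2) (Fin 2) ℤ)) :
    m = 3 ∨ m = -3 := by
  set M : Matrix (Fin 2) (Fin 2) ℤ := (K : Matrix (Fin 2) (Fin 2) ℤ) with hM
  set a : ℤ := M 0 0 with hA
  set b : ℤ := M 0 1 with hB
  have h01 := congrFun (congrFun hcomm 0) 1
  have h10 := congrFun (congrFun hcomm 1) 0
  have h11 := congrFun (congrFun hcomm 1) 1
  simp [Matrix.mul_apply, Fin.sum_univ_two, ← hM] at h01 h10 h11
  have hc : M 1 0 = -b := by linarith
  have hd : M 1 1 = a + m * b := by linarith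
  rw [Matrix.det_fin_two, ← hA, ← hB, hc, hd] at hdet
  have key : a*a + m*(a*b) + b*b = -1 := by ring_nf at hdet ⊢; linarith
  have hane : a ≠ 0 := by
    intro h; rw [h] at key; nlinarith
  have hbne : b ≠ 0 := by
    intro h; rw [h] at key; nlinarith
  have h1 : m * a * b = -(a*a + b*b + 1) := by linarith [key, mul_assoc m a b]
  have habs : (a.natAbs * a.natAbs + b.natAbs * b.natAbs + 1 : ℕ)
      = m.natAbs * a.natAbs * b.natAbs := by
    have h2 : ((a.natAbs * a.natAbs + b.natAbs * b.natAbs + 1 : ℕ) : ℤ)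
        = ((m.natAbs * a.natAbs * b.natAbs : ℕ) : ℤ) := by
      push_cast [Int.natCast_natAbs]
      rw [abs_mul_abs_self, abs_mul_abs_self, ← abs_mul, ← abs_mul, h1, abs_neg,
        abs_of_nonneg (by nlinarith : (0:ℤ) ≤ a*a + b*b + 1)]
    exact_mod_cast h2
  have hk := markov m.natAbs a.natAbs b.natAbs
    (Int.natAbs_pos.mpr hane) (Int.natAbs_pos.mpr hbne) (by rw [habs])
  omega
end

section
/- Let m = 3, L = [[3, -1], [1, 0]], B = [[-2, 1], [-1, 1]]. If K ∈ GL(2,ℤ) commutes with L and det(K) = -1, then K = ±(B * L^n) for some integer n. -/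
open Matrix

noncomputable section

def L0 : Matrix.SpecialLinearGroup (Fin 2) ℤ :=
  ⟨!![3, -1; 1, 0], by norm_num [Matrix.det_fin_two_of]⟩

def Bm : Matrix (Fin 2) (Fin 2) ℤ := !![-2, 1; -1, 1]

def Mm (x y : ℤ) : Matrix (Fin 2) (Fin 2) ℤ := !![x + 3*y, -y; y, x]

lemma coe_pow_succ (n : ℤ) :
    ((L0 ^ (n+1) : Matrix.SpecialLinearGroup (Fin 2) ℤ) : Matrix (Fin 2) (Fin 2) ℤ)
      = ((L0 ^ n : Matrix.SpecialLinearGroup (Fin 2) ℤ) : Matrix (Fin 2) (Fin 2) ℤ) * !![3, -1; 1, 0] := by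
  rw [_root_.zpow_add_one]
  rfl

def Good (x y : ℤ) : Prop :=
  ∃ n : ℤ, Mm x y = Bm * ((L0 ^ n : Matrix.SpecialLinearGroup (Fin 2) ℤ) : Matrix (Fin 2) (Fin 2) ℤ)
    ∨ Mm x y = -(Bm * ((L0 ^ n : Matrix.SpecialLinearGroup (Fin 2) ℤ) : Matrix (Fin 2) (Fin 2) ℤ))

lemma good_base : Good (-1) 1 := by
  refine ⟨0, Or.inr ?_⟩
  show Mm (-1) 1 = -(Bm * ((1 : Matrix.SpecialLinearGroup (Fin 2) ℤ) : Matrix (Fin 2) (Fin 2) ℤ))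
  ext i j
  fin_cases i <;> fin_cases j <;>
    simp [Mm, Bm, Matrix.mul_apply, Fin.sum_univ_two]

lemma mm_neg (x y : ℤ) : Mm (-x) (-y) = -(Mm x y) := by
  ext i j; fin_cases i <;> fin_cases j <;> simp [Mm] <;> ring

lemma good_neg {x y : ℤ} (h : Good x y) : Good (-x) (-y) := by
  obtain ⟨n, h | h⟩ := h
  · exact ⟨n, Or.inr (by rw [mm_neg, h])⟩
  · exact ⟨n, Or.inl (by rw [mm_neg, h, neg_neg])⟩

lemma mm_mul_L (x y : ℤ) : Mm x y = Mm (3*x+y) (-x) * !![3, -1; 1, 0] := by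
  ext i j; fin_cases i <;> fin_cases j <;>
    simp [Mm, Matrix.mul_apply, Fin.sum_univ_two] <;> ring

lemma mm_mul_L' (x y : ℤ) : Mm (-y) (x + 3*y) = Mm x y * !![3, -1; 1, 0] := by
  ext i j; fin_cases i <;> fin_cases j <;>
    simp [Mm, Matrix.mul_apply, Fin.sum_univ_two] <;> ring

lemma good_stepA {x y : ℤ} (h : Good (3*x+y) (-x)) : Good x y := by
  obtain ⟨n, h | h⟩ := h
  · refine ⟨n + 1, Or.inl ?_⟩
    rw [coe_pow_succ, ← Matrix.mul_assoc, ← h, ← mm_mul_L]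
  · refine ⟨n + 1, Or.inr ?_⟩
    rw [coe_pow_succ, ← Matrix.mul_assoc, ← neg_mul, ← h, ← mm_mul_L]

lemma linv : (!![3, -1; 1, 0] : Matrix (Fin 2) (Fin 2) ℤ) * !![0, 1; -1, 3] = 1 := by
  ext i j; fin_cases i <;> fin_cases j <;>
    simp [Matrix.mul_apply, Fin.sum_univ_two, Matrix.one_apply]

lemma good_stepB {x y : ℤ} (h : Good (-y) (x+3*y)) : Good x y := by
  obtain ⟨n, h | h⟩ := h
  · refine ⟨n - 1, Or.inl ?_⟩
    have h2 : Mm x y * !![3, -1; 1, 0]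
        = Bm * ((L0 ^ n : Matrix.SpecialLinearGroup (Fin 2) ℤ) : Matrix (Fin 2) (Fin 2) ℤ) := by
      rw [← mm_mul_L']; exact h
    have h3 : ((L0 ^ (n-1) : Matrix.SpecialLinearGroup (Fin 2) ℤ) : Matrix (Fin 2) (Fin 2) ℤ) * !![3, -1; 1, 0]
        = ((L0 ^ n : Matrix.SpecialLinearGroup (Fin 2) ℤ) : Matrix (Fin 2) (Fin 2) ℤ) := by
      rw [← coe_pow_succ]; ring_nf
    have h4 : Bm * ((L0 ^ n : Matrix.SpecialLinearGroup (Fin 2) ℤ) : Matrix (Fin 2) (Fin 2) ℤ) * !![0, 1; -1, 3]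
        = Bm * ((L0 ^ (n-1) : Matrix.SpecialLinearGroup (Fin 2) ℤ) : Matrix (Fin 2) (Fin 2) ℤ) := by
      rw [← h3]
      simp only [Matrix.mul_assoc]
      rw [linv, Matrix.mul_one]
    rw [← h4, ← h2]
    simp only [Matrix.mul_assoc]
    rw [linv, Matrix.mul_one]
  · refine ⟨n - 1, Or.inr ?_⟩
    have h2 : Mm x y * !![3, -1; 1, 0]
        = -(Bm * ((L0 ^ n : Matrix.SpecialLinearGroup (Fin 2) ℤ) : Matrix (Fin 2) (Fin 2) ℤ)) := by
      rw [← mm_mul_L']; exact h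
    have h3 : ((L0 ^ (n-1) : Matrix.SpecialLinearGroup (Fin 2) ℤ) : Matrix (Fin 2) (Fin 2) ℤ) * !![3, -1; 1, 0]
        = ((L0 ^ n : Matrix.SpecialLinearGroup (Fin 2) ℤ) : Matrix (Fin 2) (Fin 2) ℤ) := by
      rw [← coe_pow_succ]; ring_nf
    have h4 : Bm * ((L0 ^ n : Matrix.SpecialLinearGroup (Fin 2) ℤ) : Matrix (Fin 2) (Fin 2) ℤ) * !![0, 1; -1, 3]
        = Bm * ((L0 ^ (n-1) : Matrix.SpecialLinearGroup (Fin 2) ℤ) : Matrix (Fin 2) (Fin 2) ℤ) := by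
      rw [← h3]
      simp only [Matrix.mul_assoc]
      rw [linv, Matrix.mul_one]
    rw [← h4, ← neg_mul, ← h2]
    simp only [Matrix.mul_assoc]
    rw [linv, Matrix.mul_one]

lemma key : ∀ N : ℕ, ∀ x y : ℤ, 1 ≤ y → y ≤ N → x^2 + 3*x*y + y^2 = -1 → Good x y := by
  intro N
  induction N with
  | zero => intro x y h1 h2 _; exfalso; omega
  | succ N ih =>
    intro x y h1 h2 hn
    rcases eq_or_lt_of_le h1 with h | h
    · -- y = 1
      have hy : y = 1 := h.symm
      subst hy
      have hfac : (x + 1) * (x + 2) = 0 := by nlinarith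
      rcases mul_eq_zero.mp hfac with h' | h'
      · have : x = -1 := by omega
        subst this; exact good_base
      · have : x = -2 := by omega
        subst this
        apply good_stepB
        norm_num
        exact good_base
    · -- 2 ≤ y
      have hy2 : 2 ≤ y := h
      by_cases hc : 0 ≤ 2*x + 3*y
      · have hx : x ≤ -1 := by nlinarith
        have hlt : -x < y := by
          by_contra hcon
          push_neg at hcon
          nlinarith [mul_nonneg (show (0:ℤ) ≤ -(x+y) by linarith) (show (0:ℤ) ≤ 2*(x+2*y) by linarith)]
        apply good_stepA
        apply ih (3*x+y) (-x) (by omega) (by push_cast at h2 ⊢; omega)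
        linear_combination hn
      · push_neg at hc
        have hy' : 1 ≤ x + 3*y := by
          by_contra hcon
          push_neg at hcon
          have h5 : 2*y ≤ -(x+y) := by omega
          have h6 : y ≤ -(x+2*y) := by omega
          have h7 : (2*y)*y ≤ (-(x+y))*(-(x+2*y)) := mul_le_mul h5 h6 (by omega) (by omega)
          nlinarith [h7]
        have hlt : x + 3*y < y := by
          by_contra hcon
          push_neg at hcon
          nlinarith [mul_nonneg (show (0:ℤ) ≤ -(x+y) by omega) (show (0:ℤ) ≤ x+2*y by omega)]
        apply good_stepB
        apply ih (-y) (x+3*y) hy' (by push_cast at h2 ⊢; omega)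
        linear_combination hn

end

theorem stmt_5
    (L : Matrix.SpecialLinearGroup (Fin 2) ℤ)
    (hL : (L : Matrix (Fin 2) (Fin 2) ℤ) = !![3, -1; 1, 0])
    (K : Matrix.GeneralLinearGroup (Fin 2) ℤ)
    (hdet : ((K : Matrix (Fin 2) (Fin 2) ℤ)).det = -1)
    (hcomm : (K : Matrix (Fin 2) (Fin 2) ℤ) * (L : Matrix (Fin 2) (Fin 2) ℤ)
      = (L : Matrix (Fin 2) (Fin 2) ℤ) * (K : Matrix (Fin 2) (Fin 2) ℤ)) :
    ∃ n : ℤ, (K : Matrix (Fin 2) (Fin 2) ℤ)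
        = !![-2, 1; -1, 1] * ((L ^ n : Matrix.SpecialLinearGroup (Fin 2) ℤ) : Matrix (Fin 2) (Fin 2) ℤ)
      ∨ (K : Matrix (Fin 2) (Fin 2) ℤ)
        = -(!![-2, 1; -1, 1] * ((L ^ n : Matrix.SpecialLinearGroup (Fin 2) ℤ) : Matrix (Fin 2) (Fin 2) ℤ)) := by
  have hL0 : L = L0 := Subtype.ext (by rw [hL]; rfl)
  subst hL0
  rw [hL] at hcomm
  set Km : Matrix (Fin 2) (Fin 2) ℤ := (K : Matrix (Fin 2) (Fin 2) ℤ) with hKm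
  set x := Km 1 1 with hx
  set y := Km 1 0 with hy
  have e00 := congrFun (congrFun hcomm 0) 0
  have e01 := congrFun (congrFun hcomm 0) 1
  have e10 := congrFun (congrFun hcomm 1) 0
  have e11 := congrFun (congrFun hcomm 1) 1
  simp [Matrix.mul_apply, Fin.sum_univ_two] at e00 e01 e10 e11
  have hK : Km = Mm x y := by
    ext i j
    fin_cases i <;> fin_cases j <;> simp [Mm] <;> omega
  have hdeteq : x^2 + 3*x*y + y^2 = -1 := by
    rw [Matrix.det_fin_two, hK] at hdet
    simp [Mm] at hdet
    nlinarith [hdet]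
  have hgood : Good x y := by
    rcases lt_trichotomy y 0 with hneg | hzero | hpos
    · have h1 := key (-y).toNat (-x) (-y) (by omega) (by omega) (by linear_combination hdeteq)
      have h2 := good_neg h1
      simpa using h2
    · exfalso; rw [hzero] at hdeteq; nlinarith [sq_nonneg x]
    · exact key y.toNat x y (by omega) (by omega) hdeteq
  obtain ⟨n, hg | hg⟩ := hgood
  · exact ⟨n, Or.inl (by rw [hK, hg]; rfl)⟩
  · exact ⟨n, Or.inr (by rw [hK, hg]; rfl)⟩
end

section
/- Every matrix A ∈ SL(2,ℤ) with trace(A) = 3 is conjugate in SL(2,ℤ) to the matrix [[2, 1], [1, 1]]. -/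
open Matrix

abbrev SL2 := Matrix.SpecialLinearGroup (Fin 2) ℤ

def Tk (n : ℤ) : SL2 := ⟨!![1,n;0,1], by simp [Matrix.det_fin_two_of]⟩
def Sm : SL2 := ⟨!![0,-1;1,0], by simp [Matrix.det_fin_two_of]⟩

lemma conj_val (g B : SL2) :
    ((g * B * g⁻¹ : SL2) : Matrix (Fin 2) (Fin 2) ℤ)
      = (g : Matrix (Fin 2) (Fin 2) ℤ) * B * adjugate (g : Matrix (Fin 2) (Fin 2) ℤ) := by
  simp [Matrix.SpecialLinearGroup.coe_mul, Matrix.SpecialLinearGroup.coe_inv]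

lemma Tk_conj (k a b c d : ℤ) (B : SL2) (hB : (B : Matrix (Fin 2) (Fin 2) ℤ) = !![a,b;c,d]) :
    ((Tk k * B * (Tk k)⁻¹ : SL2) : Matrix (Fin 2) (Fin 2) ℤ)
      = !![a + k*c, b + k*(d-a) - k*k*c; c, d - k*c] := by
  rw [conj_val, hB]
  simp only [Tk, Matrix.adjugate_fin_two_of]
  ext i j
  fin_cases i <;> fin_cases j <;> simp [Matrix.mul_apply, Fin.sum_univ_two] <;> ring

lemma Sm_conj (a b c d : ℤ) (B : SL2) (hB : (B : Matrix (Fin 2) (Fin 2) ℤ) = !![a,b;c,d]) :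
    ((Sm * B * Sm⁻¹ : SL2) : Matrix (Fin 2) (Fin 2) ℤ) = !![d, -c; -b, a] := by
  rw [conj_val, hB]
  simp only [Sm, Matrix.adjugate_fin_two_of]
  ext i j
  fin_cases i <;> fin_cases j <;> simp [Matrix.mul_apply, Fin.sum_univ_two]

lemma exists_k_pos (a c : ℤ) (hc : 0 < c) : ∃ k : ℤ, (2*(a+k*c)-3).natAbs ≤ c.natAbs := by
  refine ⟨-((2*a-3+c)/(2*c)), ?_⟩
  have h1 : 0 ≤ (2*a-3+c) % (2*c) := Int.emod_nonneg _ (by omega)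
  have h2 : (2*a-3+c) % (2*c) < 2*c := Int.emod_lt_of_pos _ (by omega)
  have heq : 2*(a+(-((2*a-3+c)/(2*c)))*c)-3 = (2*a-3+c) % (2*c) - c := by
    rw [Int.emod_def]; ring
  omega

lemma exists_k (a c : ℤ) (hc : c ≠ 0) : ∃ k : ℤ, (2*(a+k*c)-3).natAbs ≤ c.natAbs := by
  rcases lt_or_gt_of_ne hc with h | h
  · obtain ⟨k, hk⟩ := exists_k_pos a (-c) (by omega)
    exact ⟨-k, by have : 2*(a + -k*c)-3 = 2*(a+k*(-c))-3 := by ring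
                  rw [this]; omega⟩
  · exact exists_k_pos a c h

lemma conj_assoc (g h A : SL2) : (g*h)*A*(g*h)⁻¹ = g*(h*A*h⁻¹)*g⁻¹ := by group

lemma main_red (n : ℕ) : ∀ A : SL2, (A : Matrix (Fin 2) (Fin 2) ℤ).trace = 3 →
    ((A : Matrix (Fin 2) (Fin 2) ℤ) 1 0).natAbs ≤ n →
    ∃ P : SL2, ((P * A * P⁻¹ : SL2) : Matrix (Fin 2) (Fin 2) ℤ) = !![2,1;1,1] := by
  induction n with
  | zero =>
    intro A htr hb
    set M := (A : Matrix (Fin 2) (Fin 2) ℤ) with hMdef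
    have hM : M = !![M 0 0, M 0 1; M 1 0, M 1 1] := Matrix.eta_fin_two M
    have hdet : M 0 0 * M 1 1 - M 0 1 * M 1 0 = 1 := by
      have := A.property; rw [Matrix.det_fin_two] at this; exact this
    have htr' : M 0 0 + M 1 1 = 3 := by rwa [Matrix.trace_fin_two] at htr
    have hc0 : M 1 0 = 0 := by omega
    rw [hc0, mul_zero, sub_zero] at hdet
    rcases Int.eq_one_or_neg_one_of_mul_eq_one' hdet with ⟨h1, h2⟩ | ⟨h1, h2⟩ <;> omega
  | succ n ih =>
    intro A htr hb
    set M := (A : Matrix (Fin 2) (Fin 2) ℤ) with hMdef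
    set a := M 0 0 with ha; set b := M 0 1 with hbb; set c := M 1 0 with hcc
    set d := M 1 1 with hd
    have hM : M = !![a, b; c, d] := Matrix.eta_fin_two M
    have hdet : a * d - b * c = 1 := by
      have := A.property; rw [Matrix.det_fin_two] at this; exact this
    have htr' : a + d = 3 := by rwa [Matrix.trace_fin_two] at htr
    have hc : c ≠ 0 := by
      intro h0
      rw [h0, mul_zero, sub_zero] at hdet
      rcases Int.eq_one_or_neg_one_of_mul_eq_one' hdet with ⟨h1, h2⟩ | ⟨h1, h2⟩ <;> omega
    obtain ⟨k, hk⟩ := exists_k a c hc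
    have hB : ((Tk k * A * (Tk k)⁻¹ : SL2) : Matrix (Fin 2) (Fin 2) ℤ)
        = !![a + k*c, b + k*(d-a) - k*k*c; c, d - k*c] := Tk_conj k a b c d A hM
    set a1 := a + k*c with ha1
    set b1 := b + k*(d-a) - k*k*c with hb1
    set d1 := d - k*c with hd1
    have hdet1 : a1 * d1 - b1 * c = 1 := by
      rw [ha1, hb1, hd1]; linear_combination hdet
    have htr1 : a1 + d1 = 3 := by rw [ha1, hd1]; linear_combination htr'
    have hbc : 4*b1*c = 5 - (2*a1-3)*(2*a1-3) := by
      linear_combination (-4 : ℤ) * hdet1 + (4*a1) * htr1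
    have hk' : (2*a1 - 3).natAbs ≤ c.natAbs := by exact hk
    by_cases h1 : c.natAbs = 1
    · -- base case |c| = 1
      have ha12 : a1 = 1 ∨ a1 = 2 := by omega
      have hsq : (2*a1-3)*(2*a1-3) = 1 := by rcases ha12 with h | h <;> rw [h] <;> norm_num
      rw [hsq] at hbc
      have hb1c : b1 * c = 1 := by linarith
      rcases Int.eq_one_or_neg_one_of_mul_eq_one' hb1c with ⟨hb1', hc'⟩ | ⟨hb1', hc'⟩
      · rcases ha12 with haa | haa
        · -- !![1,1;1,2] : conjugate further by Tk 1
          refine ⟨Tk 1 * Tk k, ?_⟩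
          rw [conj_assoc]
          rw [Tk_conj 1 a1 b1 c d1 _ hB]
          rw [haa, hb1', hc']
          have : d1 = 2 := by omega
          rw [this]; norm_num
        · -- !![2,1;1,1] : done
          refine ⟨Tk k, ?_⟩
          rw [hB, haa, hb1', hc']
          have : d1 = 1 := by omega
          rw [this]
      · rcases ha12 with haa | haa
        · -- !![1,-1;-1,2] : conjugate by Sm
          refine ⟨Sm * Tk k, ?_⟩
          rw [conj_assoc]
          rw [Sm_conj a1 b1 c d1 _ hB]
          rw [haa, hb1', hc']
          have : d1 = 2 := by omega
          rw [this]; norm_num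
        · -- !![2,-1;-1,1] : conjugate by Sm then Tk 1
          refine ⟨Tk 1 * (Sm * Tk k), ?_⟩
          rw [conj_assoc]
          have hB2 : ((Sm * Tk k * A * (Sm * Tk k)⁻¹ : SL2) : Matrix (Fin 2) (Fin 2) ℤ)
              = !![d1, -c; -b1, a1] := by
            rw [conj_assoc]; exact Sm_conj a1 b1 c d1 _ hB
          rw [Tk_conj 1 d1 (-c) (-b1) a1 _ hB2]
          rw [haa, hb1', hc']
          have : d1 = 1 := by omega
          rw [this]; norm_num
    · -- recursive case |c| ≥ 2
      have hc2 : 2 ≤ c.natAbs := by omega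
      have hmm : (2*a1-3)*(2*a1-3) ≤ c * c := by
        have h1' : ((2*a1-3)*(2*a1-3)).natAbs ≤ (c*c).natAbs := by
          rw [Int.natAbs_mul, Int.natAbs_mul]; exact Nat.mul_le_mul hk' hk'
        have h2' : 0 ≤ (2*a1-3)*(2*a1-3) := mul_self_nonneg _
        have h3' : 0 ≤ c * c := mul_self_nonneg _
        omega
      have hcc4 : 4 ≤ c * c := by
        have : (2:ℕ) * 2 ≤ c.natAbs * c.natAbs := Nat.mul_le_mul hc2 hc2
        have h3' : 0 ≤ c * c := mul_self_nonneg _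
        have : 4 ≤ (c*c).natAbs := by rw [Int.natAbs_mul]; omega
        omega
      have hbcsq : b1 * b1 < c * c := by
        nlinarith [sq_nonneg (2*a1-3), sq_nonneg (4*b1*c), mul_self_nonneg b1, mul_self_nonneg c]
      have hblt : b1.natAbs < c.natAbs := by
        have h2' : (b1*b1).natAbs < (c*c).natAbs := by
          have := mul_self_nonneg b1; have := mul_self_nonneg c; omega
        rw [Int.natAbs_mul, Int.natAbs_mul] at h2'
        by_contra hcon
        push_neg at hcon
        exact absurd (Nat.mul_le_mul hcon hcon) (by omega)
      have hA2 : ((Sm * Tk k * A * (Sm * Tk k)⁻¹ : SL2) : Matrix (Fin 2) (Fin 2) ℤ)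
          = !![d1, -c; -b1, a1] := by
        rw [conj_assoc]; exact Sm_conj a1 b1 c d1 _ hB
      have htr2 : ((Sm * Tk k * A * (Sm * Tk k)⁻¹ : SL2) : Matrix (Fin 2) (Fin 2) ℤ).trace = 3 := by
        rw [hA2, Matrix.trace_fin_two_of]; omega
      have hbound2 : (((Sm * Tk k * A * (Sm * Tk k)⁻¹ : SL2) : Matrix (Fin 2) (Fin 2) ℤ) 1 0).natAbs ≤ n := by
        rw [hA2]
        have he : (!![d1, -c; -b1, a1] : Matrix (Fin 2) (Fin 2) ℤ) 1 0 = -b1 := by simp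
        rw [he]; omega
      obtain ⟨Q, hQ⟩ := ih _ htr2 hbound2
      refine ⟨Q * (Sm * Tk k), ?_⟩
      rw [conj_assoc]
      exact hQ

theorem stmt_6 (A : Matrix.SpecialLinearGroup (Fin 2) ℤ)
    (htr : (A : Matrix (Fin 2) (Fin 2) ℤ).trace = 3) :
    ∃ P : Matrix.SpecialLinearGroup (Fin 2) ℤ,
      ((P * A * P⁻¹ : Matrix.SpecialLinearGroup (Fin 2) ℤ) : Matrix (Fin 2) (Fin 2) ℤ)
        = !![2, 1; 1, 1] := by
  exact main_red ((A : Matrix (Fin 2) (Fin 2) ℤ) 1 0).natAbs A htr le_rfl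
end

section
/- Every matrix A ∈ SL(2,ℤ) with trace(A) = -3 is conjugate in SL(2,ℤ) to the matrix [[-2, -1], [-1, -1]]. -/
/-!
Conjugating `!![a, b; c, d]` by `T ^ n` keeps `c` and shifts `a - d` by `2 n c`; conjugating by `S`
exchanges `b` and `c` up to sign. Since `c ≠ 0` whenever `|tr| ≠ 2`, descent on `|c|` reaches a
matrix with `|a - d| ≤ |c| ≤ |b|`. For trace `-3` the discriminant identity
`(a - d)² + 4 b c = 5` then forces `b c = 1` and `(a - d)² = 1`, leaving four matrices, each
conjugate to `!![-2, -1; -1, -1]` by an explicit matrix.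
-/

open Matrix MatrixGroups ModularGroup Matrix.SpecialLinearGroup

theorem exists_two_mul_abs_sub_mul_le (x : ℤ) {c : ℤ} (hc : c ≠ 0) :
    ∃ n : ℤ, 2 * |x - n * c| ≤ |c| := by
  have hmod := Int.bmod_eq_self_sub_bdiv_mul x c.natAbs
  have hle := Int.le_bmod (x := x) (Int.natAbs_pos.2 hc)
  have hlt := Int.bmod_lt (x := x) (Int.natAbs_pos.2 hc)
  refine ⟨x.bdiv c.natAbs * c.sign, ?_⟩
  rw [mul_assoc, Int.sign_mul_self, ← hmod, ← abs_two, ← abs_mul, abs_le]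
  rw [Int.natCast_natAbs] at hle hlt
  have hc0 := abs_nonneg c
  constructor <;> omega

theorem Matrix.SpecialLinearGroup.trace_coe_conj {n R : Type*} [Fintype n] [DecidableEq n]
    [CommRing R] (P A : SpecialLinearGroup n R) :
    ((P * A * P⁻¹ : SpecialLinearGroup n R) : Matrix n n R).trace = (A : Matrix n n R).trace := by
  rw [coe_mul, coe_mul, trace_mul_cycle, ← coe_mul, inv_mul_cancel, coe_one, one_mul]

theorem IsConj.trace_coe_eq {n R : Type*} [Fintype n] [DecidableEq n] [CommRing R]
    {A B : SpecialLinearGroup n R} (h : IsConj A B) :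
    (B : Matrix n n R).trace = (A : Matrix n n R).trace := by
  obtain ⟨P, rfl⟩ := isConj_iff.1 h
  exact trace_coe_conj P A

theorem isConj_of_coe_mul_eq {n R : Type*} [Fintype n] [DecidableEq n] [CommRing R]
    {A B : SpecialLinearGroup n R} (P : SpecialLinearGroup n R)
    (h : (P : Matrix n n R) * A = B * P) : IsConj A B :=
  ⟨toUnits P, Subtype.ext (by simpa using h)⟩

local notation:1024 "↑ₘ" A:1024 => ((A : SL(2, ℤ)) : Matrix (Fin 2) (Fin 2) ℤ)

theorem coe_T_zpow_conj (n : ℤ) (A : SL(2, ℤ)) :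
    ↑ₘ(T ^ n * A * (T ^ n)⁻¹) =
      !![A 0 0 + n * A 1 0, A 0 1 + n * (A 1 1 - A 0 0) - n ^ 2 * A 1 0;
         A 1 0, A 1 1 - n * A 1 0] := by
  rw [coe_mul, coe_mul, coe_inv, coe_T_zpow, eta_fin_two ↑ₘA]
  simp [adjugate_fin_two]
  constructor <;> ring

theorem coe_S_conj (A : SL(2, ℤ)) :
    ↑ₘ(S * A * S⁻¹) = !![A 1 1, -A 1 0; -A 0 1, A 0 0] := by
  rw [coe_mul, coe_mul, coe_inv, coe_S, eta_fin_two ↑ₘA]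
  simp [adjugate_fin_two]

theorem apply_one_zero_ne_zero_of_abs_trace_ne_two {A : SL(2, ℤ)} (htr : |(↑ₘA).trace| ≠ 2) :
    A 1 0 ≠ 0 := by
  intro hc
  have hdet := A.det_coe
  rw [det_fin_two, hc, mul_zero, sub_zero] at hdet
  rw [trace_fin_two] at htr
  rcases Int.eq_one_or_neg_one_of_mul_eq_one' hdet with ⟨ha, hd⟩ | ⟨ha, hd⟩ <;>
    simp [ha, hd] at htr

/-- Gauss reduction of the binary quadratic form `c x² + (d - a) x y - b y²` whose roots are the
fixed points of `!![a, b; c, d]`. -/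
def IsGaussReduced (A : SL(2, ℤ)) : Prop :=
  |A 0 0 - A 1 1| ≤ |A 1 0| ∧ |A 1 0| ≤ |A 0 1|

theorem exists_isConj_isGaussReduced (A : SL(2, ℤ)) (htr : |(↑ₘA).trace| ≠ 2) :
    ∃ B, IsConj A B ∧ IsGaussReduced B := by
  induction hN : (A 1 0).natAbs using Nat.strong_induction_on generalizing A with
  | _ N ih =>
  have hc := apply_one_zero_ne_zero_of_abs_trace_ne_two htr
  obtain ⟨n, hn⟩ := exists_two_mul_abs_sub_mul_le (A 0 0 - A 1 1) (mul_ne_zero two_ne_zero hc)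
  set B := T ^ (-n) * A * (T ^ (-n))⁻¹
  have hAB : IsConj A B := isConj_iff.2 ⟨_, rfl⟩
  have hB : ↑ₘB = _ := coe_T_zpow_conj (-n) A
  have hB10 : B 1 0 = A 1 0 := by simp [hB]
  have hBdiag : |B 0 0 - B 1 1| ≤ |A 1 0| := by
    rw [abs_mul, abs_two] at hn
    have hdiff : B 0 0 - B 1 1 = A 0 0 - A 1 1 - n * (2 * A 1 0) := by simp [hB]; ring
    rw [hdiff]; linarith
  by_cases hcb : |B 1 0| ≤ |B 0 1|
  · exact ⟨B, hAB, hB10 ▸ hBdiag, hcb⟩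
  have hBC : IsConj B (S * B * S⁻¹) := isConj_iff.2 ⟨S, rfl⟩
  have hlt : ((S * B * S⁻¹) 1 0).natAbs < N := by
    have hC10 : (S * B * S⁻¹) 1 0 = -B 0 1 := by rw [coe_S_conj]; rfl
    rw [← hN, hC10, Int.natAbs_neg]
    rw [hB10, Int.abs_eq_natAbs, Int.abs_eq_natAbs] at hcb
    omega
  obtain ⟨D, hCD, hD⟩ := ih _ hlt (S * B * S⁻¹) (by rwa [(hAB.trans hBC).trace_coe_eq]) rfl
  exact ⟨D, hAB.trans (hBC.trans hCD), hD⟩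

theorem mul_eq_one_of_sq_add_four_mul_eq_five {x b c : ℤ} (hxc : |x| ≤ |c|) (hcb : |c| ≤ |b|)
    (h : x ^ 2 + 4 * (b * c) = 5) : b * c = 1 := by
  have hx2 : x ^ 2 ≤ c ^ 2 := sq_le_sq.2 hxc
  have hc2 : c ^ 2 ≤ |b * c| := by rw [abs_mul, ← sq_abs c, sq]; gcongr
  rcases le_or_gt (b * c) 0 with hbc | hbc
  · rw [abs_of_nonpos hbc] at hc2
    nlinarith
  · nlinarith

def negCatMap : SL(2, ℤ) := ⟨!![-2, -1; -1, -1], by norm_num [det_fin_two_of]⟩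

theorem IsGaussReduced.isConj_negCatMap {B : SL(2, ℤ)} (hBred : IsGaussReduced B)
    (htr : (↑ₘB).trace = -3) : IsConj B negCatMap := by
  obtain ⟨a, b, c, d, hB⟩ : ∃ a b c d, ↑ₘB = !![a, b; c, d] := ⟨_, _, _, _, eta_fin_two _⟩
  have hdet : a * d - b * c = 1 := by simpa [hB, det_fin_two_of] using B.det_coe
  have hsum : a + d = -3 := by simpa [hB, trace_fin_two_of] using htr
  have hred : |a - d| ≤ |c| ∧ |c| ≤ |b| := by simpa [IsGaussReduced, hB] using hBred
  have hdisc : (a - d) ^ 2 + 4 * (b * c) = 5 := by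
    linear_combination (a + d - 3) * hsum - 4 * hdet
  have hbc : b * c = 1 := mul_eq_one_of_sq_add_four_mul_eq_five hred.1 hred.2 hdisc
  have had : (a - d) ^ 2 = 1 := by linear_combination hdisc - 4 * hbc
  rcases Int.eq_one_or_neg_one_of_mul_eq_one' hbc with ⟨rfl, rfl⟩ | ⟨rfl, rfl⟩ <;>
    rcases sq_eq_one_iff.1 had with h | h
  · obtain ⟨rfl, rfl⟩ : a = -1 ∧ d = -2 := by omega
    exact isConj_of_coe_mul_eq ⟨!![-1, -1; 2, 1], by decide⟩ (by rw [hB]; decide)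
  · obtain ⟨rfl, rfl⟩ : a = -2 ∧ d = -1 := by omega
    exact isConj_of_coe_mul_eq ⟨!![-3, 2; -2, 1], by decide⟩ (by rw [hB]; decide)
  · obtain ⟨rfl, rfl⟩ : a = -1 ∧ d = -2 := by omega
    exact isConj_of_coe_mul_eq ⟨!![-2, -3; -1, -2], by decide⟩ (by rw [hB]; decide)
  · obtain ⟨rfl, rfl⟩ : a = -2 ∧ d = -1 := by omega
    obtain rfl : B = negCatMap := Subtype.ext hB
    exact IsConj.refl _

theorem stmt_7 (A : Matrix.SpecialLinearGroup (Fin 2) ℤ)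
    (htr : (A : Matrix (Fin 2) (Fin 2) ℤ).trace = -3) :
    ∃ P : Matrix.SpecialLinearGroup (Fin 2) ℤ,
      ((P * A * P⁻¹ : Matrix.SpecialLinearGroup (Fin 2) ℤ) : Matrix (Fin 2) (Fin 2) ℤ)
        = !![-2, -1; -1, -1] := by
  obtain ⟨B, hAB, hB⟩ := exists_isConj_isGaussReduced A (by rw [htr]; decide)
  obtain ⟨P, hP⟩ := isConj_iff.1 (hAB.trans (hB.isConj_negCatMap (hAB.trace_coe_eq.trans htr)))
  exact ⟨P, congrArg Subtype.val hP⟩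
end
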